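/- If Δ and Γ are simplicial complexes (given as facet sets or face posets) equipped with acyclic (discrete Morse) matchings with critical cell sets Δ^c and Γ^c respectively, then the join Δ * Γ admits an acyclic matching whose critical cells are exactly {σ ∪ τ : σ ∈ Δ^c, τ ∈ Γ^c}. -/
import Mathlib


/-- An (abstract) simplicial complex on vertex set `V`: a downward closed family of
finite subsets of `V`. -/
def IsComplex {V : Type*} (K : Set (Finset V)) : Prop :=
  ∀ s ∈ K, ∀ t, t ⊆ s → t ∈ K

/-- A matching on the Hasse diagram of the face poset of `K`: a set of pairs (face,
coface of dimension one greater) in which each face occurs at most once. -/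
def IsMatching {V : Type*} (K : Set (Finset V)) (M : Set (Finset V × Finset V)) : Prop :=
  (∀ p ∈ M, p.1 ∈ K ∧ p.2 ∈ K ∧ p.1 ⊆ p.2 ∧ p.2.card = p.1.card + 1) ∧
  (∀ p ∈ M, ∀ q ∈ M, p ≠ q → p.1 ≠ q.1 ∧ p.1 ≠ q.2 ∧ p.2 ≠ q.1 ∧ p.2 ≠ q.2)

/-- A discrete Morse (acyclic) matching: a matching admitting no nontrivial closed
V-path `σ₀, τ₀, σ₁, τ₁, …, σ_k, τ_k, σ₀`, where each `(σ_i, τ_i)` is matched and each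
`σ_{i+1}` is a facet of `τ_i` different from `σ_i`. -/
def IsAcyclicMatching {V : Type*} (K : Set (Finset V))
    (M : Set (Finset V × Finset V)) : Prop :=
  IsMatching K M ∧
  ¬ ∃ (k : ℕ) (σ τ : ℕ → Finset V), 0 < k ∧
      (∀ i ≤ k, (σ i, τ i) ∈ M) ∧
      (∀ i < k, σ (i + 1) ⊆ τ i ∧ σ (i + 1) ≠ σ i ∧ (σ (i + 1)).card + 1 = (τ i).card) ∧
      σ 0 ⊆ τ k ∧ σ 0 ≠ σ k ∧ (σ 0).card + 1 = (τ k).card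

/-- The critical cells of a matching: the faces of `K` unmatched by `M`. -/
def criticalCells {V : Type*} (K : Set (Finset V))
    (M : Set (Finset V × Finset V)) : Set (Finset V) :=
  {s | s ∈ K ∧ ∀ p ∈ M, s ≠ p.1 ∧ s ≠ p.2}

/-- The join of two simplicial complexes on disjoint vertex sets: faces are the
unions `σ ∪ τ` with `σ ∈ K`, `τ ∈ L`. -/
def joinComplex {V W : Type*} [DecidableEq V] [DecidableEq W]
    (K : Set (Finset V)) (L : Set (Finset W)) : Set (Finset (V ⊕ W)) :=
  {s | ∃ σ ∈ K, ∃ τ ∈ L, s = σ.image Sum.inl ∪ τ.image Sum.inr}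

set_option linter.unusedSectionVars false
namespace JoinAux
variable {V W : Type*} [DecidableEq V] [DecidableEq W]

def jl (σ : Finset V) (τ : Finset W) : Finset (V ⊕ W) :=
  σ.image Sum.inl ∪ τ.image Sum.inr

lemma mem_jl_inl {σ : Finset V} {τ : Finset W} {x : V} :
    Sum.inl x ∈ jl σ τ ↔ x ∈ σ := by
  simp [jl]

lemma mem_jl_inr {σ : Finset V} {τ : Finset W} {x : W} :
    Sum.inr x ∈ jl σ τ ↔ x ∈ τ := by
  simp [jl]

lemma jl_inj {σ σ' : Finset V} {τ τ' : Finset W} (h : jl σ τ = jl σ' τ') :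
    σ = σ' ∧ τ = τ' := by
  constructor
  · ext x; rw [← mem_jl_inl (τ := τ), h, mem_jl_inl]
  · ext x; rw [← mem_jl_inr (σ := σ), h, mem_jl_inr]

lemma jl_subset {σ σ' : Finset V} {τ τ' : Finset W} :
    jl σ τ ⊆ jl σ' τ' ↔ σ ⊆ σ' ∧ τ ⊆ τ' := by
  constructor
  · intro h
    constructor
    · intro x hx; exact mem_jl_inl.mp (h (mem_jl_inl.mpr hx))
    · intro x hx; exact mem_jl_inr.mp (h (mem_jl_inr.mpr hx))
  · rintro ⟨h1, h2⟩ y hy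
    rcases Finset.mem_union.mp hy with h | h
    · rcases Finset.mem_image.mp h with ⟨x, hx, rfl⟩
      exact mem_jl_inl.mpr (h1 hx)
    · rcases Finset.mem_image.mp h with ⟨x, hx, rfl⟩
      exact mem_jl_inr.mpr (h2 hx)

lemma jl_card (σ : Finset V) (τ : Finset W) :
    (jl σ τ).card = σ.card + τ.card := by
  rw [jl, Finset.card_union_of_disjoint, Finset.card_image_of_injective _ Sum.inl_injective,
    Finset.card_image_of_injective _ Sum.inr_injective]
  simp [Finset.disjoint_left]

/-- helper facts about matchings -/
lemma matched_fst_eq {K : Set (Finset V)} {M : Set (Finset V × Finset V)}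
    (hM : IsMatching K M) {x y u v : Finset V} (hxy : (x, y) ∈ M) (huv : (u, v) ∈ M)
    (h : x = u) : y = v := by
  by_contra hne
  have hpq : ((x, y) : Finset V × Finset V) ≠ (u, v) := by
    intro h'; exact hne (congrArg Prod.snd h')
  exact (hM.2 _ hxy _ huv hpq).1 h

lemma matched_fst_ne_snd {K : Set (Finset V)} {M : Set (Finset V × Finset V)}
    (hM : IsMatching K M) {x y u v : Finset V} (hxy : (x, y) ∈ M) (huv : (u, v) ∈ M) :
    x ≠ v := by
  intro h
  by_cases hpq : ((x, y) : Finset V × Finset V) = (u, v)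
  · have hy : y = v := congrArg Prod.snd hpq
    have h1 := (hM.1 _ hxy).2.2.2
    simp only at h1
    have hyx : y = x := by rw [hy, ← h]
    rw [hyx] at h1
    omega
  · exact (hM.2 _ hxy _ huv hpq).2.1 h

lemma matched_snd_eq {K : Set (Finset V)} {M : Set (Finset V × Finset V)}
    (hM : IsMatching K M) {x y u v : Finset V} (hxy : (x, y) ∈ M) (huv : (u, v) ∈ M)
    (h : y = v) : x = u := by
  by_contra hne
  have hpq : ((x, y) : Finset V × Finset V) ≠ (u, v) := by
    intro h'; exact hne (congrArg Prod.fst h')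
  exact (hM.2 _ hxy _ huv hpq).2.2.2 h

lemma crit_ne_fst {K : Set (Finset V)} {M : Set (Finset V × Finset V)}
    {z x y : Finset V} (hz : z ∈ criticalCells K M) (hxy : (x, y) ∈ M) : z ≠ x :=
  (hz.2 _ hxy).1

lemma crit_ne_snd {K : Set (Finset V)} {M : Set (Finset V × Finset V)}
    {z x y : Finset V} (hz : z ∈ criticalCells K M) (hxy : (x, y) ∈ M) : z ≠ y :=
  (hz.2 _ hxy).2

end JoinAux

set_option linter.unusedVariables false

open JoinAux

/-- If simplicial complexes `K` and `L` carry acyclic (discrete Morse) matchings with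
critical cells `K^c` and `L^c`, then the join `K * L` admits an acyclic matching whose
critical cells are exactly the joins `σ ∪ τ` of critical cells `σ ∈ K^c`, `τ ∈ L^c`. -/
theorem join_acyclic_matching {V W : Type*} [DecidableEq V] [DecidableEq W]
    (K : Set (Finset V)) (L : Set (Finset W)) (hK : IsComplex K) (hL : IsComplex L)
    (M : Set (Finset V × Finset V)) (N : Set (Finset W × Finset W))
    (hM : IsAcyclicMatching K M) (hN : IsAcyclicMatching L N) :
    ∃ P : Set (Finset (V ⊕ W) × Finset (V ⊕ W)),
      IsAcyclicMatching (joinComplex K L) P ∧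
      criticalCells (joinComplex K L) P =
        {s | ∃ σ ∈ criticalCells K M, ∃ τ ∈ criticalCells L N,
          s = σ.image Sum.inl ∪ τ.image Sum.inr} := by
  classical
  obtain ⟨hMm, hMa⟩ := hM
  obtain ⟨hNm, hNa⟩ := hN
  set P : Set (Finset (V ⊕ W) × Finset (V ⊕ W)) :=
    {p | (∃ q ∈ M, ∃ t ∈ L, p = (jl q.1 t, jl q.2 t)) ∨
         (∃ s ∈ criticalCells K M, ∃ q ∈ N, p = (jl s q.1, jl s q.2))} with hPdef
  have hPmatch : IsMatching (joinComplex K L) P := by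
    constructor
    · rintro p (⟨⟨x, y⟩, hxy, t, ht, rfl⟩ | ⟨s, hs, ⟨x, y⟩, hxy, rfl⟩)
      · obtain ⟨h1, h2, h3, h4⟩ := hMm.1 _ hxy
        refine ⟨⟨x, h1, t, ht, rfl⟩, ⟨y, h2, t, ht, rfl⟩,
          jl_subset.mpr ⟨h3, subset_rfl⟩, ?_⟩
        simp only [jl_card]; simp only at h4; omega
      · obtain ⟨h1, h2, h3, h4⟩ := hNm.1 _ hxy
        refine ⟨⟨s, hs.1, x, h1, rfl⟩, ⟨s, hs.1, y, h2, rfl⟩,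
          jl_subset.mpr ⟨subset_rfl, h3⟩, ?_⟩
        simp only [jl_card]; simp only at h4; omega
    · rintro p hp q hq hne
      rcases hp with ⟨⟨x, y⟩, hxy, t, ht, rfl⟩ | ⟨s, hs, ⟨x, y⟩, hxy, rfl⟩ <;>
        rcases hq with ⟨⟨u, v⟩, huv, r, hr, rfl⟩ | ⟨w, hw, ⟨u, v⟩, huv, rfl⟩
      · refine ⟨?_, ?_, ?_, ?_⟩ <;> intro h <;> obtain ⟨h1, h2⟩ := jl_inj h
        · exact hne (by rw [h1, h2, matched_fst_eq hMm hxy huv h1])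
        · exact matched_fst_ne_snd hMm hxy huv h1
        · exact matched_fst_ne_snd hMm huv hxy h1.symm
        · exact hne (by rw [h1, h2, matched_snd_eq hMm hxy huv h1])
      · refine ⟨?_, ?_, ?_, ?_⟩ <;> intro h <;> obtain ⟨h1, h2⟩ := jl_inj h
        · exact crit_ne_fst hw hxy h1.symm
        · exact crit_ne_fst hw hxy h1.symm
        · exact crit_ne_snd hw hxy h1.symm
        · exact crit_ne_snd hw hxy h1.symm
      · refine ⟨?_, ?_, ?_, ?_⟩ <;> intro h <;> obtain ⟨h1, h2⟩ := jl_inj h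
        · exact crit_ne_fst hs huv h1
        · exact crit_ne_snd hs huv h1
        · exact crit_ne_fst hs huv h1
        · exact crit_ne_snd hs huv h1
      · refine ⟨?_, ?_, ?_, ?_⟩ <;> intro h <;> obtain ⟨h1, h2⟩ := jl_inj h
        · exact hne (by rw [h1, h2, matched_fst_eq hNm hxy huv h2])
        · exact matched_fst_ne_snd hNm hxy huv h2
        · exact matched_fst_ne_snd hNm huv hxy h2.symm
        · exact hne (by rw [h1, h2, matched_snd_eq hNm hxy huv h2])
  have hPacyc : IsAcyclicMatching (joinComplex K L) P := by
    refine ⟨hPmatch, ?_⟩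
    rintro ⟨k, σ, τ, hk, hpair, hstep, hw1, hw2, hw3⟩
    -- decompose every simplex in the cycle into its two components
    have hdec : ∀ i, ∃ a b c d, i ≤ k →
        σ i = jl a b ∧ τ i = jl c d ∧
        (((a, c) ∈ M ∧ d = b) ∨
          (a ∈ criticalCells K M ∧ (b, d) ∈ N ∧ c = a)) := by
      intro i
      by_cases hi : i ≤ k
      · rcases hpair i hi with ⟨⟨x, y⟩, hxy, t, ht, heq⟩ | ⟨s, hs, ⟨x, y⟩, hxy, heq⟩
        · exact ⟨x, t, y, t, fun _ => ⟨congrArg Prod.fst heq, congrArg Prod.snd heq,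
            Or.inl ⟨hxy, rfl⟩⟩⟩
        · exact ⟨s, x, s, y, fun _ => ⟨congrArg Prod.fst heq, congrArg Prod.snd heq,
            Or.inr ⟨hs, hxy, rfl⟩⟩⟩
      · exact ⟨∅, ∅, ∅, ∅, fun h => absurd h hi⟩
    choose a b c d hdec using hdec
    have hσ : ∀ i ≤ k, σ i = jl (a i) (b i) := fun i hi => (hdec i hi).1
    have hτ : ∀ i ≤ k, τ i = jl (c i) (d i) := fun i hi => (hdec i hi).2.1
    have htype : ∀ i ≤ k, ((a i, c i) ∈ M ∧ d i = b i) ∨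
        (a i ∈ criticalCells K M ∧ (b i, d i) ∈ N ∧ c i = a i) :=
      fun i hi => (hdec i hi).2.2
    -- the cyclic successor
    set nx : ℕ → ℕ := fun i => if i < k then i + 1 else 0 with hnxdef
    have hnx_le : ∀ i, nx i ≤ k := by
      intro i; simp only [hnxdef]; split <;> omega
    have htrans : ∀ i ≤ k,
        σ (nx i) ⊆ τ i ∧ σ (nx i) ≠ σ i ∧ (σ (nx i)).card + 1 = (τ i).card := by
      intro i hi
      by_cases h : i < k
      · simpa only [hnxdef, if_pos h] using hstep i h
      · have hik : i = k := le_antisymm hi (not_lt.mp h)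
        subst hik
        simpa only [hnxdef, if_neg h] using ⟨hw1, hw2, hw3⟩
    have hraw : ∀ i ≤ k, a (nx i) ⊆ c i ∧ b (nx i) ⊆ d i ∧
        (a (nx i)).card + (b (nx i)).card + 1 = (c i).card + (d i).card ∧
        ¬(a (nx i) = a i ∧ b (nx i) = b i) := by
      intro i hi
      obtain ⟨h1, h2, h3⟩ := htrans i hi
      rw [hσ _ (hnx_le i), hτ _ hi] at h1 h3
      rw [hσ _ (hnx_le i), hσ _ hi] at h2
      obtain ⟨h1a, h1b⟩ := jl_subset.mp h1
      rw [jl_card, jl_card] at h3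
      refine ⟨h1a, h1b, by omega, ?_⟩
      rintro ⟨e1, e2⟩
      exact h2 (by rw [e1, e2])
    -- a matched `c i` cannot be the next lower simplex
    have hanc : ∀ i ≤ k, (a i, c i) ∈ M → a (nx i) ≠ c i := by
      intro i hi h1 h
      rcases htype (nx i) (hnx_le i) with ⟨h2, _⟩ | ⟨h2, _, _⟩
      · exact matched_fst_ne_snd hMm h2 h1 h
      · exact crit_ne_snd h2 h1 h
    -- type-1 transitions
    have ht1 : ∀ i ≤ k, (a i, c i) ∈ M →
        a (nx i) ⊆ c i ∧ a (nx i) ≠ a i ∧ (a (nx i)).card + 1 = (c i).card ∧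
        b (nx i) = b i := by
      intro i hi h1
      obtain ⟨r1, r2, r3, r4⟩ := hraw i hi
      have hdi : d i = b i := by
        rcases htype i hi with ⟨_, h⟩ | ⟨h, _, _⟩
        · exact h
        · exact absurd rfl (crit_ne_fst h h1)
      rw [hdi] at r2 r3
      have hclt : (a (nx i)).card < (c i).card :=
        Finset.card_lt_card (Finset.ssubset_iff_subset_ne.mpr ⟨r1, hanc i hi h1⟩)
      have hble : (b (nx i)).card ≤ (b i).card := Finset.card_le_card r2
      have hbcard : (b (nx i)).card = (b i).card := by omega
      have hbeq : b (nx i) = b i := Finset.eq_of_subset_of_card_le r2 (le_of_eq hbcard.symm)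
      refine ⟨r1, ?_, by omega, hbeq⟩
      intro h
      exact r4 ⟨h, hbeq⟩
    -- cardinalities of the first components never increase along the cycle
    have hgle : ∀ i ≤ k, (a (nx i)).card ≤ (a i).card := by
      intro i hi
      rcases htype i hi with ⟨h1, _⟩ | ⟨_, _, h3⟩
      · obtain ⟨_, _, h4, _⟩ := ht1 i hi h1
        have := (hMm.1 _ h1).2.2.2
        simp only at this
        omega
      · have := Finset.card_le_card (hraw i hi).1
        rw [h3] at this
        exact this
    have hchain : ∀ j ≤ k, ∀ i ≤ j, (a j).card ≤ (a i).card := by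
      intro j hj
      induction j with
      | zero =>
        intro i hi
        have : i = 0 := by omega
        rw [this]
      | succ n ih =>
        intro i hi
        have hn : n < k := by omega
        have h1 : (a (n + 1)).card ≤ (a n).card := by
          have := hgle n (le_of_lt hn)
          simpa only [hnxdef, if_pos hn] using this
        rcases Nat.lt_or_ge i (n + 1) with h | h
        · exact le_trans h1 (ih (by omega) i (by omega))
        · have : i = n + 1 := by omega
          rw [this]
    have hwraple : (a 0).card ≤ (a k).card := by
      have := hgle k le_rfl
      simpa only [hnxdef, lt_irrefl, if_neg (lt_irrefl k)] using this
    have hconst : ∀ i ≤ k, (a i).card = (a 0).card := by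
      intro i hi
      have h1 := hchain i hi 0 (Nat.zero_le _)
      have h2 := hchain k le_rfl i hi
      omega
    -- type-2 transitions (using the cardinality balance)
    have ht2 : ∀ i ≤ k, (a i ∈ criticalCells K M ∧ (b i, d i) ∈ N ∧ c i = a i) →
        a (nx i) = a i ∧ b (nx i) ⊆ d i ∧ b (nx i) ≠ b i ∧
        (b (nx i)).card + 1 = (d i).card := by
      intro i hi ⟨_, _, h3⟩
      obtain ⟨r1, r2, r3, r4⟩ := hraw i hi
      rw [h3] at r1 r3
      have hcard : (a (nx i)).card = (a i).card := by
        rw [hconst _ (hnx_le i), hconst _ hi]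
      have haeq : a (nx i) = a i := Finset.eq_of_subset_of_card_le r1 (le_of_eq hcard.symm)
      refine ⟨haeq, r2, ?_, by omega⟩
      intro h
      exact r4 ⟨haeq, h⟩
    -- the set of type-1 indices
    set T : Finset ℕ := (Finset.range (k + 1)).filter (fun i => (a i, c i) ∈ M) with hTdef
    have hmemT : ∀ i, i ∈ T ↔ i ≤ k ∧ (a i, c i) ∈ M := by
      intro i
      rw [hTdef, Finset.mem_filter, Finset.mem_range, Nat.lt_succ_iff]
    by_cases hT : T = ∅
    · -- no type-1 pairs at all: the cycle projects to a cycle in N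
      have ht2' : ∀ i ≤ k, a i ∈ criticalCells K M ∧ (b i, d i) ∈ N ∧ c i = a i := by
        intro i hi
        rcases htype i hi with ⟨h1, _⟩ | h
        · have : i ∈ T := (hmemT i).mpr ⟨hi, h1⟩
          rw [hT] at this
          exact absurd this (Finset.notMem_empty i)
        · exact h
      have hwrapN := ht2 k le_rfl (ht2' k le_rfl)
      rw [show nx k = 0 from by simp only [hnxdef, if_neg (lt_irrefl k)]] at hwrapN
      refine hNa ⟨k, b, d, hk, fun i hi => (ht2' i hi).2.1, ?_,
        hwrapN.2.1, hwrapN.2.2.1, hwrapN.2.2.2⟩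
      intro i hi
      have := ht2 i (le_of_lt hi) (ht2' i (le_of_lt hi))
      rw [show nx i = i + 1 from by simp only [hnxdef, if_pos hi]] at this
      exact ⟨this.2.1, this.2.2.1, this.2.2.2⟩
    · -- there is a type-1 pair
      have hTne : T.Nonempty := Finset.nonempty_iff_ne_empty.mpr hT
      set i0 := T.min' hTne with hi0def
      set i1 := T.max' hTne with hi1def
      have hi0T : i0 ∈ T := T.min'_mem hTne
      have hi1T : i1 ∈ T := T.max'_mem hTne
      have hi0k : i0 ≤ k := ((hmemT i0).mp hi0T).1
      have hi1k : i1 ≤ k := ((hmemT i1).mp hi1T).1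
      have hmin : ∀ j ∈ T, i0 ≤ j := fun j hj => T.min'_le j hj
      have hmax : ∀ j ∈ T, j ≤ i1 := fun j hj => T.le_max' j hj
      -- the first component is constant along type-2 segments
      have hseg : ∀ p e, p + e ≤ k → (∀ j, p ≤ j → j < p + e → j ∉ T) →
          a (p + e) = a p := by
        intro p e
        induction e with
        | zero => intro _ _; rfl
        | succ n ih =>
          intro hle hnT
          have hjk : p + n < k := by omega
          have hjT : p + n ∉ T := hnT _ (by omega) (by omega)
          have h1 : a (p + n + 1) = a (p + n) := by
            rcases htype (p + n) (by omega) with ⟨hm1, _⟩ | hh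
            · exact absurd ((hmemT _).mpr ⟨by omega, hm1⟩) hjT
            · have := (ht2 (p + n) (by omega) hh).1
              rwa [show nx (p + n) = p + n + 1 from by
                simp only [hnxdef, if_pos hjk]] at this
          have h2 : a (p + n) = a p := ih (by omega) (fun j hj hj2 => hnT j hj (by omega))
          rw [show p + (n + 1) = p + n + 1 from rfl, h1, h2]
      have hseg' : ∀ p q, p ≤ q → q ≤ k → (∀ j, p ≤ j → j < q → j ∉ T) → a q = a p := by
        intro p q hpq hqk hnT
        have := hseg p (q - p) (by omega) (fun j h1 h2 => hnT j h1 (by omega))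
        rwa [show p + (q - p) = q from by omega] at this
      have h0seg : a i0 = a 0 :=
        hseg' 0 i0 (Nat.zero_le _) hi0k
          (fun j _ hj hjT => absurd (hmin j hjT) (by omega))
      have hWrap : a i0 = a (nx i1) := by
        by_cases h : i1 < k
        · have hkT : k ∉ T := fun hkT => absurd (hmax k hkT) (by omega)
          have hk0 : a 0 = a k := by
            rcases htype k le_rfl with ⟨hm1, _⟩ | hh
            · exact absurd ((hmemT k).mpr ⟨le_rfl, hm1⟩) hkT
            · have := (ht2 k le_rfl hh).1
              rwa [show nx k = 0 from by simp only [hnxdef, if_neg (lt_irrefl k)]] at this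
          have hseg2 : a k = a (i1 + 1) :=
            hseg' (i1 + 1) k (by omega) le_rfl
              (fun j hj1 hj2 hjT => absurd (hmax j hjT) (by omega))
          rw [show nx i1 = i1 + 1 from by simp only [hnxdef, if_pos h]]
          rw [h0seg, hk0, hseg2]
        · have hik : i1 = k := by omega
          rw [show nx i1 = 0 from by rw [hik]; simp only [hnxdef, if_neg (lt_irrefl k)]]
          exact h0seg
      have hM1 : (a i1, c i1) ∈ M := ((hmemT i1).mp hi1T).2
      obtain ⟨w1, w2, w3, w4⟩ := ht1 i1 hi1k hM1
      by_cases hm1 : T.card = 1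
      · -- a single type-1 pair: immediate contradiction
        obtain ⟨x, hx⟩ := Finset.card_eq_one.mp hm1
        have e0 : i0 = x := by
          have := hi0T; rw [hx, Finset.mem_singleton] at this; exact this
        have e1 : i1 = x := by
          have := hi1T; rw [hx, Finset.mem_singleton] at this; exact this
        exact w2 (by rw [← hWrap, e0, e1])
      · -- at least two type-1 pairs: extract a cycle in M
        have hm2 : 2 ≤ T.card := by
          have := Finset.card_pos.mpr hTne; omega
        set m := T.card with hmdef
        have hrfl : T.card = m := hmdef.symm
        set e := T.orderEmbOfFin hrfl with hedef
        set E : ℕ → ℕ := fun j => if h : j < m then e ⟨j, h⟩ else 0 with hEdef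
        have hEeq : ∀ j (h : j < m), E j = e ⟨j, h⟩ := by
          intro j h; simp only [hEdef, dif_pos h]
        have hET : ∀ j (h : j < m), E j ∈ T := by
          intro j h; rw [hEeq j h]; exact Finset.orderEmbOfFin_mem T hrfl _
        have hsurj : ∀ x ∈ T, ∃ j : Fin m, e j = x := by
          intro x hx
          have h1 : (x : ℕ) ∈ (T : Set ℕ) := hx
          rw [← Finset.range_orderEmbOfFin T hrfl] at h1
          exact h1
        have hconsec : ∀ j, j + 1 < m → a (E (j + 1)) = a (nx (E j)) := by
          intro j hj
          have hjm : j < m := by omega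
          have hlt : E j < E (j + 1) := by
            rw [hEeq j hjm, hEeq (j + 1) hj]
            exact (T.orderEmbOfFin hrfl).strictMono (Fin.mk_lt_mk.mpr (by omega))
          have hEk : E (j + 1) ≤ k := ((hmemT _).mp (hET (j + 1) hj)).1
          have hEjk : E j < k := lt_of_lt_of_le hlt hEk
          have hsg : a (E (j + 1)) = a (E j + 1) := by
            refine hseg' (E j + 1) (E (j + 1)) hlt hEk ?_
            intro i h1 h2 hiT
            obtain ⟨j', hj'⟩ := hsurj i hiT
            have l1 : (⟨j, hjm⟩ : Fin m) < j' := by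
              have : e ⟨j, hjm⟩ < e j' := by rw [hj', ← hEeq j hjm]; omega
              exact (T.orderEmbOfFin hrfl).strictMono.lt_iff_lt.mp this
            have l2 : j' < (⟨j + 1, hj⟩ : Fin m) := by
              have : e j' < e ⟨j + 1, hj⟩ := by rw [hj', ← hEeq (j + 1) hj]; omega
              exact (T.orderEmbOfFin hrfl).strictMono.lt_iff_lt.mp this
            rw [Fin.mk_lt_mk ] at l2
            have l3 : j < j'.1 := l1
            omega
          rw [show nx (E j) = E j + 1 from by simp only [hnxdef, if_pos hEjk], hsg]
        have hE0 : E 0 = i0 := by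
          rw [hEeq 0 (by omega)]
          exact Finset.orderEmbOfFin_zero hrfl (by omega)
        have hEl : E (m - 1) = i1 := by
          rw [hEeq (m - 1) (by omega)]
          exact Finset.orderEmbOfFin_last hrfl (by omega)
        refine hMa ⟨m - 1, fun j => a (E j), fun j => c (E j), by omega, ?_, ?_, ?_, ?_, ?_⟩
        · intro j hj
          exact ((hmemT _).mp (hET j (by omega))).2
        · intro j hj
          have hj1 : j + 1 < m := by omega
          have hMj := ((hmemT _).mp (hET j (by omega))).2
          have hEjk2 : E j ≤ k := ((hmemT _).mp (hET j (by omega))).1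
          obtain ⟨u1, u2, u3, _⟩ := ht1 (E j) hEjk2 hMj
          show a (E (j + 1)) ⊆ c (E j) ∧ a (E (j + 1)) ≠ a (E j) ∧
            (a (E (j + 1))).card + 1 = (c (E j)).card
          rw [hconsec j hj1]
          exact ⟨u1, u2, u3⟩
        · simp only [hE0, hEl, hWrap]; exact w1
        · simp only [hE0, hEl, hWrap]; exact w2
        · simp only [hE0, hEl, hWrap]; exact w3


  refine ⟨P, hPacyc, ?_⟩
  ext s
  constructor
  · rintro ⟨⟨x, hx, y, hy, rfl⟩, hcrit⟩
    have hxc : x ∈ criticalCells K M := by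
      refine ⟨hx, fun p hp => ?_⟩
      constructor
      · intro h
        exact (hcrit (jl p.1 y, jl p.2 y) (Or.inl ⟨p, hp, y, hy, rfl⟩)).1 (by rw [h]; rfl)
      · intro h
        exact (hcrit (jl p.1 y, jl p.2 y) (Or.inl ⟨p, hp, y, hy, rfl⟩)).2 (by rw [h]; rfl)
    have hyc : y ∈ criticalCells L N := by
      refine ⟨hy, fun p hp => ?_⟩
      constructor
      · intro h
        exact (hcrit (jl x p.1, jl x p.2) (Or.inr ⟨x, hxc, p, hp, rfl⟩)).1 (by rw [h]; rfl)
      · intro h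
        exact (hcrit (jl x p.1, jl x p.2) (Or.inr ⟨x, hxc, p, hp, rfl⟩)).2 (by rw [h]; rfl)
    exact ⟨x, hxc, y, hyc, rfl⟩
  · rintro ⟨x, hx, y, hy, rfl⟩
    refine ⟨⟨x, hx.1, y, hy.1, rfl⟩, ?_⟩
    rintro p (⟨⟨u, v⟩, huv, t, ht, rfl⟩ | ⟨s', hs', ⟨u, v⟩, huv, rfl⟩)
    · constructor
      · intro h; exact crit_ne_fst hx huv (jl_inj h).1
      · intro h; exact crit_ne_snd hx huv (jl_inj h).1
    · constructor
      · intro h; exact crit_ne_fst hy huv (jl_inj h).2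
      · intro h; exact crit_ne_snd hy huv (jl_inj h).2
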